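/- Let V be a finite nonempty item set, p ∈ V, P : V → ℝ with P v > 0 for all v and ∑_{v ∈ V} P v = 1. Define π(p) = |{v ∈ V : P v ≥ P p}| and NDCG = log 2 / log(1 + π(p)). Then -log(NDCG) ≤ -log(P p). -/

import Mathlib

theorem neg_log_ndcg_le_neg_log_prob {α : Type*} [DecidableEq α]
    (V : Finset α) (p : α) (hp : p ∈ V) (P : α → ℝ)
    (hpos : ∀ v ∈ V, 0 < P v) (hsum : ∑ v ∈ V, P v = 1) :
    -Real.log (Real.log 2 /
        Real.log (1 + ((V.filter (fun v => P p ≤ P v)).card : ℝ))) ≤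
      -Real.log (P p) := by
  set S := V.filter (fun v => P p ≤ P v) with hS
  have hpS : p ∈ S := Finset.mem_filter.mpr ⟨hp, le_refl _⟩
  have hn1 : 1 ≤ S.card := Finset.card_pos.mpr ⟨p, hpS⟩
  set n := S.card with hn
  have hN1 : (1 : ℝ) ≤ (n : ℝ) := by exact_mod_cast hn1
  have hNpos : (0 : ℝ) < (n : ℝ) := lt_of_lt_of_le one_pos hN1
  -- n * P p ≤ 1
  have hPp : 0 < P p := hpos p hp
  have hsumS : (n : ℝ) * P p ≤ ∑ v ∈ S, P v := by
    have := Finset.card_nsmul_le_sum S P (P p)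
      (fun v hv => (Finset.mem_filter.mp hv).2)
    simpa [nsmul_eq_mul] using this
  have hsub : ∑ v ∈ S, P v ≤ 1 := by
    rw [← hsum]
    exact Finset.sum_le_sum_of_subset_of_nonneg (Finset.filter_subset _ _)
      (fun v hv _ => (hpos v hv).le)
  have hnp : (n : ℝ) * P p ≤ 1 := le_trans hsumS hsub
  -- log(1+n) ≤ n * log 2
  have h2pow : (1 : ℝ) + (n : ℝ) ≤ 2 ^ n := by
    have : n + 1 ≤ 2 ^ n := by have := Nat.lt_two_pow_self (n := n); omega
    calc (1 : ℝ) + (n : ℝ) = ((n + 1 : ℕ) : ℝ) := by push_cast; ring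
      _ ≤ ((2 ^ n : ℕ) : ℝ) := by exact_mod_cast this
      _ = 2 ^ n := by push_cast; ring
  have hlogpos : 0 < Real.log (1 + (n : ℝ)) :=
    Real.log_pos (by linarith)
  have hlog2pos : 0 < Real.log 2 := Real.log_pos (by norm_num)
  have hlog_le : Real.log (1 + (n : ℝ)) ≤ (n : ℝ) * Real.log 2 := by
    have := Real.log_le_log (by positivity) h2pow
    simpa [Real.log_pow] using this
  -- P p ≤ log 2 / log (1+n)
  have hkey : P p ≤ Real.log 2 / Real.log (1 + (n : ℝ)) := by
    rw [le_div_iff₀ hlogpos]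
    nlinarith [mul_le_mul_of_nonneg_left hlog_le hPp.le]
  have : Real.log (P p) ≤ Real.log (Real.log 2 / Real.log (1 + (n : ℝ))) :=
    Real.log_le_log hPp hkey
  linarith
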